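/- arXiv:2408.16708 — 4 statements merged into one kernel-verified Lean document; each statement's English description precedes it below -/
import Mathlib

section
/- In the 8-group Austrian unemployment design, the contrast h = (-1/4,-1/4,1/4,1/4,1/4,1/4,-1/4,-1/4) is not aliased with any function of the form beta(x, w', w'', w''') = xi(x, w', w'') + eta(x, w', w'''): for every x and all functions xi, eta, the sum over the 8 groups of h_g times beta evaluated at the group's covariates is zero. -/
/-- Contrast weights for the 8-group Austrian unemployment design. -/
noncomputable def hAut : Fin 8 → ℝ := ![-1/4, -1/4, 1/4, 1/4, 1/4, 1/4, -1/4, -1/4]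

/-- The low-earnings covariate w′ of the 8 groups. -/
noncomputable def wP : Fin 8 → ℝ := ![1, -1, 1, -1, 1, -1, 1, -1]

/-- The infrequent-unemployment covariate w″ of the 8 groups. -/
noncomputable def wPP : Fin 8 → ℝ := ![1, 1, -1, -1, 1, 1, -1, -1]

/-- The time covariate w‴ of the 8 groups. -/
noncomputable def wPPP : Fin 8 → ℝ := ![-1, -1, -1, -1, 1, 1, 1, 1]

/-- In the 8-group Austrian unemployment design, the contrast h is not
aliased with any function of the form β(x,w′,w″,w‴) = ξ(x,w′,w″) + η(x,w′,w‴):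
for every x and all functions ξ, η, the contrast sum over the 8 groups is 0. -/
theorem stmt_6 {X : Type*} (x : X) (ξ η : X → ℝ → ℝ → ℝ) :
    ∑ g : Fin 8, hAut g * (ξ x (wP g) (wPP g) + η x (wP g) (wPPP g)) = 0 := by
  simp only [hAut, wP, wPP, wPPP, Fin.sum_univ_succ, Fin.sum_univ_zero,
    Matrix.cons_val_zero, Matrix.cons_val_succ]
  ring
end

section
/- If 0 = beta(x, w_1) = ... = beta(x, w_G) and treatment assignment is ignorable given x with aliasing by beta, then for any two groups g, g' the expected treatment effect satisfies E[r_g - r_{g'} | x] = E[R | Z_g = 1, x] - E[R | Z_{g'} = 1, x]. -/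
/-!
With vanishing aliasing, ignorability makes each `Z g` conditionally independent of `r g` given
`x`, so `E[Z g r g | x] = E[Z g | x] E[r g | x]`. Since exactly one `Z` equals one, `Z g R = Z g r g`,
and dividing by `E[Z g | x] > 0` leaves `E[r g | x]`. The product rule holds because conditionally
independent variables are independent under the conditional-expectation kernel at almost every
point.
-/

open MeasureTheory ProbabilityTheory

namespace ProbabilityTheory

variable {Ω : Type*} {m mΩ : MeasurableSpace Ω} [StandardBorelSpace Ω] {hm : m ≤ mΩ}
  {μ : Measure Ω} [IsFiniteMeasure μ]

lemma CondIndepFun.ae_indepFun_condExpKernel {β β' : Type*} {mβ : MeasurableSpace β}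
    {mβ' : MeasurableSpace β'} [MeasurableSpace.CountableOrCountablyGenerated Ω (β × β')]
    {f : Ω → β} {g : Ω → β'} (h : CondIndepFun m hm f g μ)
    (hf : Measurable f) (hg : Measurable g) :
    ∀ᵐ ω ∂μ, IndepFun f g (condExpKernel μ m ω) := by
  filter_upwards [ae_of_ae_trim hm ((condIndepFun_iff_map_prod_eq_prod_map_map hf hg).1 h)]
    with ω hω
  rw [indepFun_iff_map_prod_eq_prod_map_map hf.aemeasurable hg.aemeasurable]
  simpa [Kernel.map_apply _ (hf.prodMk hg), Kernel.map_apply _ hf, Kernel.map_apply _ hg,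
    Kernel.prod_apply] using hω

lemma CondIndepFun.congr {β β' : Type*} {mβ : MeasurableSpace β} {mβ' : MeasurableSpace β'}
    {f f' : Ω → β} {g g' : Ω → β'} (h : CondIndepFun m hm f g μ)
    (hf : f =ᵐ[μ] f') (hg : g =ᵐ[μ] g') : CondIndepFun m hm f' g' μ := by
  rw [← condExpKernel_comp_trim (μ := μ) hm] at hf hg
  exact Kernel.IndepFun.congr' h (Measure.ae_ae_of_ae_comp hf) (Measure.ae_ae_of_ae_comp hg)

lemma CondIndepFun.condExp_mul_ae_eq_of_measurable {f g : Ω → ℝ} (h : CondIndepFun m hm f g μ)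
    (hf : Measurable f) (hg : Measurable g) (hfi : Integrable f μ) (hgi : Integrable g μ)
    (hfg : Integrable (fun ω ↦ f ω * g ω) μ) :
    μ[fun ω ↦ f ω * g ω | m] =ᵐ[μ] fun ω ↦ μ[f | m] ω * μ[g | m] ω := by
  filter_upwards [h.ae_indepFun_condExpKernel hf hg, condExp_ae_eq_integral_condExpKernel hm hfg,
    condExp_ae_eq_integral_condExpKernel hm hfi, condExp_ae_eq_integral_condExpKernel hm hgi]
    with ω hindep hfgω hfω hgω
  rw [hfgω, hfω, hgω]
  exact hindep.integral_fun_mul_eq_mul_integral hf.aestronglyMeasurable hg.aestronglyMeasurable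

lemma CondIndepFun.condExp_mul_ae_eq {f g : Ω → ℝ} (h : CondIndepFun m hm f g μ)
    (hfi : Integrable f μ) (hgi : Integrable g μ) (hfg : Integrable (fun ω ↦ f ω * g ω) μ) :
    μ[fun ω ↦ f ω * g ω | m] =ᵐ[μ] fun ω ↦ μ[f | m] ω * μ[g | m] ω := by
  have hff' : f =ᵐ[μ] hfi.1.mk f := hfi.1.ae_eq_mk
  have hgg' : g =ᵐ[μ] hgi.1.mk g := hgi.1.ae_eq_mk
  have hprod : (fun ω ↦ f ω * g ω) =ᵐ[μ] fun ω ↦ hfi.1.mk f ω * hgi.1.mk g ω :=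
    hff'.mul hgg'
  have hmul' := (h.congr hff' hgg').condExp_mul_ae_eq_of_measurable
    hfi.1.stronglyMeasurable_mk.measurable hgi.1.stronglyMeasurable_mk.measurable
    (hfi.congr hff') (hgi.congr hgg') (hfg.congr hprod)
  filter_upwards [condExp_congr_ae (m := m) hprod, condExp_congr_ae (m := m) hff',
    condExp_congr_ae (m := m) hgg', hmul'] with ω hfgω hfω hgω hmulω
  rw [hfgω, hfω, hgω, hmulω]

lemma CondIndepFun.condExp_mul_div_condExp_ae_eq {f g : Ω → ℝ} (h : CondIndepFun m hm f g μ)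
    (hfi : Integrable f μ) (hgi : Integrable g μ) (hfg : Integrable (fun ω ↦ f ω * g ω) μ)
    (hf0 : ∀ᵐ ω ∂μ, μ[f | m] ω ≠ 0) :
    (fun ω ↦ μ[fun ω ↦ f ω * g ω | m] ω / μ[f | m] ω) =ᵐ[μ] μ[g | m] := by
  filter_upwards [h.condExp_mul_ae_eq hfi hgi hfg, hf0] with ω hmul hne
  rw [hmul, mul_div_cancel_left₀ _ hne]

end ProbabilityTheory

lemma mul_sum_mul_eq_mul_of_one_hot {ι : Type*} [Fintype ι] {z : ι → ℝ}
    (hz : ∀ i, z i = 0 ∨ z i = 1) (hsum : ∑ i, z i = 1) (r : ι → ℝ) (a : ι) :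
    z a * ∑ i, z i * r i = z a * r a := by
  classical
  rw [Finset.mul_sum, Finset.sum_eq_single a]
  · rcases hz a with h | h <;> simp [h]
  · intro b _ hba
    have hpair : z a + z b ≤ 1 := by
      rw [← hsum, ← Finset.sum_pair (Ne.symm hba)]
      refine Finset.sum_le_sum_of_subset_of_nonneg (Finset.subset_univ _) fun i _ _ ↦ ?_
      rcases hz i with h | h <;> simp [h]
    rcases hz a with ha | ha
    · simp [ha]
    rcases hz b with hb | hb
    · simp [hb]
    · linarith
  · simp

/-- `E[R | Z g = 1, x]` is encoded as `E[Z g * R | x] / E[Z g | x]`. -/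
theorem stmt_12
    {Ω : Type*} [MeasurableSpace Ω] [StandardBorelSpace Ω]
    {X : Type*} [MeasurableSpace X] {W : Type*}
    (μ : Measure Ω) [IsProbabilityMeasure μ]
    (G : ℕ) (Z : Fin G → Ω → ℝ) (r : Fin G → Ω → ℝ) (x : Ω → X)
    (w : Fin G → W) (β : X → W → ℝ)
    (hZ01 : ∀ g ω, Z g ω = 0 ∨ Z g ω = 1)
    (hZsum : ∀ ω, ∑ g, Z g ω = 1)
    (hx : Measurable x)
    -- the aliasing functions vanish: 0 = β(x, w₁) = ⋯ = β(x, w_G)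
    (hβ0 : ∀ (a : X) (g : Fin G), β a (w g) = 0)
    -- ignorability (i): Z ⟂ (r₁ - β(x,w₁), …, r_G - β(x,w_G)) | x
    (hCI : CondIndepFun (MeasurableSpace.comap x inferInstance) (hx.comap_le)
      (fun ω g => Z g ω) (fun ω g => r g ω - β (x ω) (w g)) μ)
    -- ignorability (ii): 0 < P(Z g = 1 | x) < 1 a.s.
    (hpos : ∀ g, ∀ᵐ ω ∂μ,
      0 < (μ[Z g | MeasurableSpace.comap x inferInstance]) ω ∧
        (μ[Z g | MeasurableSpace.comap x inferInstance]) ω < 1)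
    (hint : ∀ g, Integrable (r g) μ)
    (g g' : Fin G) :
    μ[fun ω => r g ω - r g' ω | MeasurableSpace.comap x inferInstance]
      =ᵐ[μ] fun ω =>
        (μ[fun ω' => Z g ω' * (∑ g'', Z g'' ω' * r g'' ω') |
            MeasurableSpace.comap x inferInstance]) ω /
          (μ[Z g | MeasurableSpace.comap x inferInstance]) ω -
        (μ[fun ω' => Z g' ω' * (∑ g'', Z g'' ω' * r g'' ω') |
            MeasurableSpace.comap x inferInstance]) ω /
          (μ[Z g' | MeasurableSpace.comap x inferInstance]) ω := by
  have hZint (a : Fin G) : Integrable (Z a) μ := by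
    by_contra hni
    obtain ⟨ω, hω, -⟩ := (hpos a).exists
    simp [condExp_of_not_integrable hni] at hω
  have hCIa (a : Fin G) : CondIndepFun _ hx.comap_le (Z a) (r a) μ := by
    simpa [Function.comp_def, hβ0] using
      hCI.comp (measurable_pi_apply a) (measurable_pi_apply a)
  have hZR (a : Fin G) :
      (fun ω ↦ Z a ω * ∑ b, Z b ω * r b ω) = fun ω ↦ Z a ω * r a ω :=
    funext fun ω ↦ mul_sum_mul_eq_mul_of_one_hot (hZ01 · ω) (hZsum ω) (r · ω) a
  have hdiv (a : Fin G) :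
      (fun ω ↦ μ[fun ω ↦ Z a ω * r a ω | MeasurableSpace.comap x inferInstance] ω /
          μ[Z a | MeasurableSpace.comap x inferInstance] ω)
        =ᵐ[μ] μ[r a | MeasurableSpace.comap x inferInstance] := by
    refine (hCIa a).condExp_mul_div_condExp_ae_eq (hZint a) (hint a) ?_ ?_
    · refine (hint a).bdd_mul (hZint a).1 (c := 1) (ae_of_all _ fun ω ↦ ?_)
      rcases hZ01 a ω with h | h <;> simp [h]
    · filter_upwards [hpos a] with ω hω using hω.1.ne'
  filter_upwards [condExp_sub (m := MeasurableSpace.comap x inferInstance) (hint g) (hint g'),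
    hdiv g, hdiv g'] with ω hsub hg hg'
  rw [hZR, hZR, hg, hg']
  exact hsub
end

section
/- The vector-valued propensity score e(x) = (P(Z_1=1|x), ..., P(Z_G=1|x)) is a balancing score: Z is conditionally independent of x given e(x); equivalently, P(Z_g = 1 | e(x)) = e_g(x) almost surely for each g. -/
/-!
Write `σ(x)`, `σ(e)` for the generated σ-algebras; `σ(e) ≤ σ(x)` because each `e_g = E[Z_g | x]`
is `σ(x)`-measurable. Since `E[Z_g | x] = e_g` is already `σ(e)`-measurable, the tower property
gives `E[Z_g | e] = e_g`. For conditional independence, `Z` is one-hot, so `1{Z ∈ s}` is a sum of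
coordinates `Z_g` and `E[1{Z ∈ s} | x]` is again `σ(e)`-measurable; conditioning first on `σ(x)`,
pulling out the `σ(x)`-measurable factor `1{x ∈ t}`, and then conditioning on `σ(e)` factorizes
`E[1{Z ∈ s} 1{x ∈ t} | e]`.
-/

open MeasureTheory ProbabilityTheory

section OneHot

variable {ι R : Type*} [Fintype ι] [DecidableEq ι]

lemma exists_eq_pi_single_of_sum_eq_one [NonAssocSemiring R] [CharZero R] {v : ι → R}
    (h01 : ∀ i, v i = 0 ∨ v i = 1) (hsum : ∑ i, v i = 1) : ∃ i, v = Pi.single i 1 := by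
  classical
  have hcard : ({i | v i = 1} : Finset ι).card = 1 := by
    have hboole : ∑ i, v i = ∑ i, if v i = 1 then (1 : R) else 0 :=
      Finset.sum_congr rfl fun i _ => by rcases h01 i with h | h <;> simp [h]
    rw [hboole, Finset.sum_boole] at hsum
    exact_mod_cast hsum
  obtain ⟨i, hi⟩ := Finset.card_eq_one.1 hcard
  refine ⟨i, funext fun j => ?_⟩
  have hj : v j = 1 ↔ j = i := by simpa using Finset.ext_iff.1 hi j
  by_cases hji : j = i
  · subst hji
    simp [hj]
  · simp [hji, (h01 j).resolve_right (mt hj.1 hji)]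

open Classical in
lemma indicator_preimage_eq_sum_of_oneHot [NonAssocSemiring R] [CharZero R] {Ω : Type*}
    {Z : ι → Ω → R} (h01 : ∀ i ω, Z i ω = 0 ∨ Z i ω = 1) (hsum : ∀ ω, ∑ i, Z i ω = 1)
    (s : Set (ι → R)) :
    ((fun ω i => Z i ω) ⁻¹' s).indicator 1 = ∑ i with Pi.single i 1 ∈ s, Z i := by
  funext ω
  obtain ⟨i, hi⟩ := exists_eq_pi_single_of_sum_eq_one (h01 · ω) (hsum ω)
  have hZ : ∀ j, Z j ω = (Pi.single i 1 : ι → R) j := congrFun hi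
  simp only [Set.indicator_apply, Set.mem_preimage, Finset.sum_apply, hZ,
    Finset.sum_pi_single', Finset.mem_filter, Finset.mem_univ, true_and, Pi.one_apply]

end OneHot

section CondExp

variable {Ω : Type*} {m m' mΩ : MeasurableSpace Ω} {μ : Measure Ω} [IsFiniteMeasure μ]

theorem condExp_ae_eq_condExp_of_le_of_aestronglyMeasurable {E : Type*} [NormedAddCommGroup E]
    [NormedSpace ℝ E] [CompleteSpace E] (hm : m ≤ m') (hm' : m' ≤ mΩ) {f : Ω → E}
    (hfm : AEStronglyMeasurable[m] (μ[f | m']) μ) : μ[f | m] =ᵐ[μ] μ[f | m'] :=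
  (condExp_condExp_of_le hm hm').symm.trans
    (condExp_of_aestronglyMeasurable' (hm.trans hm') hfm integrable_condExp)

theorem condExp_mul_ae_eq_mul_of_le_of_aestronglyMeasurable (hm : m ≤ m') (hm' : m' ≤ mΩ)
    {f b : Ω → ℝ} {C : ℝ} (hf : Integrable f μ) (hfm : AEStronglyMeasurable[m] (μ[f | m']) μ)
    (hb : AEStronglyMeasurable[m'] b μ) (hb_int : Integrable b μ)
    (hb_bdd : ∀ᵐ ω ∂μ, ‖b ω‖ ≤ C) :
    μ[f * b | m] =ᵐ[μ] μ[f | m] * μ[b | m] := by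
  have hbf : Integrable (b * f) μ := hf.bdd_mul (hb.mono hm') hb_bdd
  have hbf' : Integrable (μ[f | m'] * b) μ := by
    rw [mul_comm]; exact integrable_condExp.bdd_mul (hb.mono hm') hb_bdd
  calc μ[f * b | m] =ᵐ[μ] μ[μ[b * f | m'] | m] := by
        rw [mul_comm]; exact (condExp_condExp_of_le hm hm').symm
    _ =ᵐ[μ] μ[μ[f | m'] * b | m] := by
        refine condExp_congr_ae ?_
        rw [mul_comm (μ[f | m'])]
        exact condExp_mul_of_aestronglyMeasurable_left hb hbf hf
    _ =ᵐ[μ] μ[f | m'] * μ[b | m] := condExp_mul_of_aestronglyMeasurable_left hfm hbf' hb_int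
    _ =ᵐ[μ] μ[f | m] * μ[b | m] :=
        (condExp_ae_eq_condExp_of_le_of_aestronglyMeasurable hm hm' hfm).symm.mul
          Filter.EventuallyEq.rfl

end CondExp

/-- **(Imai and Van Dyk)** The vector-valued propensity score
`e(x) = (P(Z₁=1|x), …, P(Z_G=1|x))` is a balancing score: `Z` is conditionally
independent of `x` given `e(x)`; equivalently,
`P(Z g = 1 | e(x)) = e g (x)` almost surely for each `g`. -/
theorem stmt_13
    {Ω : Type*} [MeasurableSpace Ω] [StandardBorelSpace Ω]
    {X : Type*} [MeasurableSpace X]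
    (μ : Measure Ω) [IsProbabilityMeasure μ]
    (G : ℕ) (Z : Fin G → Ω → ℝ) (x : Ω → X)
    (hZ01 : ∀ g ω, Z g ω = 0 ∨ Z g ω = 1)
    (hZsum : ∀ ω, ∑ g, Z g ω = 1)
    (hZmeas : ∀ g, Measurable (Z g))
    (hx : Measurable x)
    -- the vector propensity score e, with e ω g = P(Z g = 1 | x) (ω)
    (e : Ω → Fin G → ℝ)
    (he : e = fun ω g => (μ[Z g | MeasurableSpace.comap x inferInstance]) ω)
    (hme : MeasurableSpace.comap e inferInstance ≤ (inferInstance : MeasurableSpace Ω)) :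
    CondIndepFun (MeasurableSpace.comap e inferInstance) hme
      (fun ω g => Z g ω) x μ ∧
    ∀ g, μ[Z g | MeasurableSpace.comap e inferInstance] =ᵐ[μ] fun ω => e ω g := by
  have hxm : MeasurableSpace.comap x inferInstance ≤ _ := hx.comap_le
  have he_g : ∀ g, μ[Z g | MeasurableSpace.comap x inferInstance] = fun ω => e ω g :=
    fun g => by rw [he]
  have he_meas : ∀ g, StronglyMeasurable[MeasurableSpace.comap e inferInstance] fun ω => e ω g :=
    fun g => ((measurable_pi_apply g).comp (comap_measurable e)).stronglyMeasurable
  have hex : MeasurableSpace.comap e inferInstance ≤ MeasurableSpace.comap x inferInstance :=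
    Measurable.comap_le <| @measurable_pi_lambda Ω (Fin G) _ (MeasurableSpace.comap x inferInstance)
      _ e fun g => he_g g ▸ stronglyMeasurable_condExp.measurable
  have hZint : ∀ g, Integrable (Z g) μ := fun g =>
    .of_bound (hZmeas g).aestronglyMeasurable 1 <| .of_forall fun ω => by
      rcases hZ01 g ω with h | h <;> simp [h]
  refine ⟨?_, fun g => he_g g ▸ condExp_ae_eq_condExp_of_le_of_aestronglyMeasurable hex hxm
    (he_g g ▸ (he_meas g).aestronglyMeasurable)⟩
  rw [condIndepFun_iff_condExp_inter_preimage_eq_mul (measurable_pi_lambda _ hZmeas) hx]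
  intro s t _ ht
  simp only [← Pi.one_def, Set.inter_indicator_one, indicator_preimage_eq_sum_of_oneHot hZ01 hZsum]
  refine condExp_mul_ae_eq_mul_of_le_of_aestronglyMeasurable (C := 1) hex hxm
    (integrable_finsetSum' _ fun g _ => hZint g) ?_
    (stronglyMeasurable_one.indicator (comap_measurable x ht)).aestronglyMeasurable
    ((integrable_const 1).indicator (hx ht)) (.of_forall fun ω => ?_)
  · refine AEStronglyMeasurable.congr ?_ (condExp_finsetSum (fun g _ => hZint g) _).symm
    simp only [he_g]
    exact (Finset.stronglyMeasurable_sum _ fun g _ => he_meas g).aestronglyMeasurable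
  · by_cases hω : ω ∈ x ⁻¹' t <;> simp [hω]
end

section
/- For any function f, Z is conditionally independent of x given the pair (e(x), f(x)), where e(x) is the vector propensity score; in particular, P(Z_g = 1 | e(x), f(x)) = e_g(x) almost surely for each g. -/
/-!
Write `mx = σ(x)` and `m' = σ(e(x), f(x)) ≤ mx`. Since `Z` is one-hot, `1{Z ∈ S} = ∑ g, 1_S(e_g) Z_g`
is linear in `Z`, so `P(Z ∈ S | mx) = ∑ g, 1_S(e_g) e_g` is a function of `e`, hence `m'`-measurable.
For any `W` with this property the tower property gives `P(W ∈ S | m') = P(W ∈ S | mx)`, and for an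
`mx`-measurable event `{x ∈ A}` pulling out known factors twice gives
`P(W ∈ S, x ∈ A | m') = E[1{x ∈ A} P(W ∈ S | mx) | m'] = P(W ∈ S | m') P(x ∈ A | m')`.
-/

open MeasureTheory ProbabilityTheory

section OneHot

variable {ι : Type*} [Fintype ι] [DecidableEq ι]

theorem exists_eq_single_of_zero_or_one_of_sum_eq_one {v : ι → ℝ}
    (h01 : ∀ i, v i = 0 ∨ v i = 1) (hsum : ∑ i, v i = 1) : ∃ i₀, v = Pi.single i₀ 1 := by
  have hcard : (Finset.univ.filter fun i => v i = 1).card = 1 := by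
    have hv : ∀ i, v i = if v i = 1 then 1 else 0 := fun i => by
      rcases h01 i with h | h <;> simp [h]
    rw [Finset.sum_congr rfl fun i _ => hv i, Finset.sum_boole] at hsum
    exact_mod_cast hsum
  obtain ⟨i₀, hi₀⟩ := Finset.card_eq_one.mp hcard
  refine ⟨i₀, funext fun i => ?_⟩
  have hmem := Finset.ext_iff.mp hi₀ i
  simp only [Finset.mem_filter, Finset.mem_univ, true_and, Finset.mem_singleton] at hmem
  rcases h01 i with h | h
  · rw [h, Pi.single_apply, if_neg fun hi => by simp [hmem.mpr hi] at h]
  · rw [h, Pi.single_apply, if_pos (hmem.mp h)]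

theorem apply_eq_sum_apply_single_mul {R : Type*} [Semiring R] (φ : (ι → R) → R) {v : ι → R}
    {i₀ : ι} (hv : v = Pi.single i₀ 1) : φ v = ∑ i, φ (Pi.single i 1) * v i := by
  subst hv
  simp [Pi.single_apply]

end OneHot

section CondExp

variable {Ω : Type*} {m' mx : MeasurableSpace Ω} [mΩ : MeasurableSpace Ω] {μ : Measure Ω}
  [IsFiniteMeasure μ]

theorem condExp_ae_eq_condExp_of_le_of_aestronglyMeasurable_s14 {f : Ω → ℝ} (hm'x : m' ≤ mx)
    (hmx : mx ≤ mΩ) (h : AEStronglyMeasurable[m'] (μ[f | mx]) μ) :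
    μ[f | m'] =ᵐ[μ] μ[f | mx] :=
  (condExp_condExp_of_le hm'x hmx).symm.trans
    (condExp_of_aestronglyMeasurable' (hm'x.trans hmx) h integrable_condExp)

theorem condIndepFun_of_aestronglyMeasurable_condExp_indicator [StandardBorelSpace Ω]
    {β X : Type*} [MeasurableSpace β] [MeasurableSpace X] (hm'x : m' ≤ mx) (hmx : mx ≤ mΩ)
    {W : Ω → β} {x : Ω → X} (hW : Measurable W) (hx : Measurable[mx] x)
    (h : ∀ S, MeasurableSet S → AEStronglyMeasurable[m'] (μ⟦W ⁻¹' S | mx⟧) μ) :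
    CondIndepFun m' (hm'x.trans hmx) W x μ := by
  rw [condIndepFun_iff_condExp_inter_preimage_eq_mul hW (hx.mono hmx le_rfl)]
  intro S A hS hA
  set p := μ⟦W ⁻¹' S | mx⟧
  set χ : Ω → ℝ := (x ⁻¹' A).indicator fun _ => 1
  have hχ_meas : StronglyMeasurable[mx] χ := stronglyMeasurable_const.indicator (hx hA)
  have hχ_int : Integrable χ μ := (integrable_const 1).indicator (hmx _ (hx hA))
  have hWS_int : Integrable ((W ⁻¹' S).indicator fun _ => (1 : ℝ)) μ :=
    (integrable_const 1).indicator (hW hS)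
  have hχ_bdd : ∀ᵐ ω ∂μ, ‖χ ω‖ ≤ 1 := .of_forall fun ω => by
    by_cases hω : ω ∈ x ⁻¹' A <;> simp [χ, hω]
  have hχ_aesm : AEStronglyMeasurable χ μ := (hχ_meas.mono hmx).aestronglyMeasurable
  have hp : μ⟦W ⁻¹' S | m'⟧ =ᵐ[μ] p :=
    condExp_ae_eq_condExp_of_le_of_aestronglyMeasurable_s14 hm'x hmx (h S hS)
  calc μ⟦W ⁻¹' S ∩ x ⁻¹' A | m'⟧
      = μ[χ * (W ⁻¹' S).indicator fun _ => 1 | m'] := by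
        rw [Set.inter_comm]
        exact congrArg (condExp m' μ) Set.inter_indicator_one
    _ =ᵐ[μ] μ[μ[χ * (W ⁻¹' S).indicator fun _ => 1 | mx] | m'] :=
        (condExp_condExp_of_le hm'x hmx).symm
    _ =ᵐ[μ] μ[χ * p | m'] := condExp_congr_ae
        (condExp_mul_of_stronglyMeasurable_left hχ_meas (hWS_int.bdd_mul hχ_aesm hχ_bdd) hWS_int)
    _ =ᵐ[μ] μ[χ | m'] * p := condExp_mul_of_aestronglyMeasurable_right (h S hS)
        (integrable_condExp.bdd_mul hχ_aesm hχ_bdd) hχ_int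
    _ =ᵐ[μ] fun ω => (μ⟦W ⁻¹' S | m'⟧) ω * μ[χ | m'] ω := by
        filter_upwards [hp] with ω hω
        rw [Pi.mul_apply, hω, mul_comm]

theorem condExp_indicator_preimage_ae_eq_sum_of_oneHot {ι : Type*} [Fintype ι] [DecidableEq ι]
    {Z : ι → Ω → ℝ} (hZ01 : ∀ i ω, Z i ω = 0 ∨ Z i ω = 1) (hZsum : ∀ ω, ∑ i, Z i ω = 1)
    (hZmeas : ∀ i, Measurable (Z i)) (m : MeasurableSpace Ω) (S : Set (ι → ℝ)) :
    μ⟦(fun ω i => Z i ω) ⁻¹' S | m⟧ =ᵐ[μ] ∑ i, (S.indicator 1 (Pi.single i 1) : ℝ) • μ[Z i | m] := by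
  have hZint : ∀ i, Integrable (Z i) μ := fun i =>
    .of_bound (hZmeas i).aestronglyMeasurable 1 (.of_forall fun ω => by
      rcases hZ01 i ω with h | h <;> simp [h])
  have hsum : (((fun ω i => Z i ω) ⁻¹' S).indicator fun _ => 1) =
      ∑ i, (S.indicator 1 (Pi.single i 1) : ℝ) • Z i := by
    ext ω
    obtain ⟨i₀, hi₀⟩ := exists_eq_single_of_zero_or_one_of_sum_eq_one (hZ01 · ω) (hZsum ω)
    show S.indicator 1 (fun i => Z i ω) = _
    rw [apply_eq_sum_apply_single_mul (S.indicator 1) hi₀]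
    simp only [Finset.sum_apply, Pi.smul_apply, smul_eq_mul]
  rw [hsum]
  refine (condExp_finsetSum (fun i _ => (hZint i).smul _) m).trans ?_
  filter_upwards [ae_all_iff.mpr fun i => condExp_smul (S.indicator 1 (Pi.single i 1) : ℝ) (Z i) m]
    with ω hω
  simp only [Finset.sum_apply, hω]

end CondExp

/-- For any function `f` of the covariates, `Z` is conditionally independent
of `x` given the pair `(e(x), f(x))`, where `e` is the vector propensity
score; in particular `P(Z g = 1 | e(x), f(x)) = e g (x)` almost surely. -/
theorem stmt_14
    {Ω : Type*} [MeasurableSpace Ω] [StandardBorelSpace Ω]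
    {X : Type*} [MeasurableSpace X] {Y : Type*} [MeasurableSpace Y]
    (μ : Measure Ω) [IsProbabilityMeasure μ]
    (G : ℕ) (Z : Fin G → Ω → ℝ) (x : Ω → X) (f : X → Y)
    (hZ01 : ∀ g ω, Z g ω = 0 ∨ Z g ω = 1)
    (hZsum : ∀ ω, ∑ g, Z g ω = 1)
    (hZmeas : ∀ g, Measurable (Z g))
    (hx : Measurable x) (hf : Measurable f)
    -- the vector propensity score e, with e ω g = P(Z g = 1 | x) (ω)
    (e : Ω → Fin G → ℝ)
    (he : e = fun ω g => (μ[Z g | MeasurableSpace.comap x inferInstance]) ω)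
    -- s(ω) = (e(ω), f(x(ω)))
    (s : Ω → (Fin G → ℝ) × Y)
    (hs : s = fun ω => (e ω, f (x ω)))
    (hms : MeasurableSpace.comap s inferInstance ≤ (inferInstance : MeasurableSpace Ω)) :
    CondIndepFun (MeasurableSpace.comap s inferInstance) hms
      (fun ω g => Z g ω) x μ ∧
    ∀ g, μ[Z g | MeasurableSpace.comap s inferInstance] =ᵐ[μ] fun ω => e ω g := by
  have hcond : ∀ g, μ[Z g | MeasurableSpace.comap x inferInstance] = fun ω => e ω g :=
    fun g => by rw [he]
  have hxmx : Measurable[MeasurableSpace.comap x inferInstance] x := comap_measurable x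
  have hsx : MeasurableSpace.comap s inferInstance ≤ MeasurableSpace.comap x inferInstance := by
    have he_x : Measurable[MeasurableSpace.comap x inferInstance] e :=
      @measurable_pi_lambda _ _ _ (.comap x inferInstance) _ e fun g =>
        hcond g ▸ stronglyMeasurable_condExp.measurable
    have hs_x : Measurable[MeasurableSpace.comap x inferInstance] s :=
      hs ▸ he_x.prodMk (hf.comp hxmx)
    exact hs_x.comap_le
  have he_s : ∀ g, Measurable[MeasurableSpace.comap s inferInstance] fun ω => e ω g :=
    fun g => by subst hs; exact (measurable_pi_apply g).comp (comap_measurable _).fst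
  refine ⟨condIndepFun_of_aestronglyMeasurable_condExp_indicator hsx hx.comap_le
    (measurable_pi_lambda _ hZmeas) hxmx fun S _ => ?_, fun g => ?_⟩
  · refine AEStronglyMeasurable.congr ?_
      (condExp_indicator_preimage_ae_eq_sum_of_oneHot hZ01 hZsum hZmeas _ S).symm
    simp only [hcond]
    exact (Finset.stronglyMeasurable_sum _ fun g _ =>
      (he_s g).stronglyMeasurable.const_smul _).aestronglyMeasurable
  · rw [← hcond g]
    exact condExp_ae_eq_condExp_of_le_of_aestronglyMeasurable_s14 hsx hx.comap_le
      (hcond g ▸ (he_s g).aestronglyMeasurable)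
end
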